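/- In StraTT, the restriction lemma holds: if Δ ⊢ Γ then Δ ⊢ ⌈Γ⌉^k for any level k, and if Δ; Γ ⊢ a :^k A then Δ; ⌈Γ⌉^k ⊢ a :^k A, where ⌈Γ⌉^k is the context obtained by removing all assumptions of Γ whose level is strictly greater than k. -/

import Mathlib

/-! Syntax of StraTT: a single universe ⋆, variables, displaced constants,
stratified dependent function types `Πx:^j A. B`, floating nondependent
function types `A → B`, abstractions, applications, the empty type and its
eliminator. Levels are natural numbers. -/

inductive Tm : Type
  | star
  | var (x : ℕ)
  | const (x : ℕ) (i : ℕ)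
  | pi (j : ℕ) (x : ℕ) (A B : Tm)
  | arrow (A B : Tm)
  | lam (x : ℕ) (b : Tm)
  | app (b a : Tm)
  | bot
  | absurd (b : Tm)
  deriving DecidableEq

namespace Tm

/-- Substitution `a{u/x}` of the term `u` for the variable `x`. -/
def subst (x : ℕ) (u : Tm) : Tm → Tm
  | star => star
  | var y => if y = x then u else var y
  | const y i => const y i
  | pi j y A B => pi j y (subst x u A) (if y = x then B else subst x u B)
  | arrow A B => arrow (subst x u A) (subst x u B)
  | lam y b => lam y (if y = x then b else subst x u b)
  | app b a => app (subst x u b) (subst x u a)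
  | bot => bot
  | absurd b => absurd (subst x u b)

/-- Displacement `a^{+i}`: uniformly increment every level annotation by `i`. -/
def incr (i : ℕ) : Tm → Tm
  | star => star
  | var y => var y
  | const y j => const y (i + j)
  | pi j y A B => pi (i + j) y (incr i A) (incr i B)
  | arrow A B => arrow (incr i A) (incr i B)
  | lam y b => lam y (incr i b)
  | app b a => app (incr i b) (incr i a)
  | bot => bot
  | absurd b => absurd (incr i b)

end Tm

/-- A signature entry `x :^k A := a` (name, level, type, definition). -/
abbrev Sig := List (ℕ × ℕ × Tm × Tm)
/-- A context entry `x :^k A` (name, level, type); head is the most recent. -/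
abbrev Ctx := List (ℕ × ℕ × Tm)

def lookupSig : Sig → ℕ → Option (ℕ × Tm × Tm)
  | [], _ => none
  | (y, k, A, a) :: Δ, x => if x = y then some (k, A, a) else lookupSig Δ x

def lookupCtx : Ctx → ℕ → Option (ℕ × Tm)
  | [], _ => none
  | (y, k, A) :: Γ, x => if x = y then some (k, A) else lookupCtx Γ x

/-- Untyped definitional equality `Δ ⊢ a ≡ b`. -/
inductive DEq (Δ : Sig) : Tm → Tm → Prop
  | refl (a) : DEq Δ a a
  | sym : DEq Δ a b → DEq Δ b a
  | trans : DEq Δ a b → DEq Δ b c → DEq Δ a c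
  | beta (x b a) : DEq Δ (.app (.lam x b) a) (Tm.subst x a b)
  | delta {x i k A a} : lookupSig Δ x = some (k, A, a) → DEq Δ (.const x i) (Tm.incr i a)
  | pi {j x A A' B B'} : DEq Δ A A' → DEq Δ B B' → DEq Δ (.pi j x A B) (.pi j x A' B')
  | arrow {A A' B B'} : DEq Δ A A' → DEq Δ B B' → DEq Δ (.arrow A B) (.arrow A' B')
  | lam {x b b'} : DEq Δ b b' → DEq Δ (.lam x b) (.lam x b')
  | app {b b' a a'} : DEq Δ b b' → DEq Δ a a' → DEq Δ (.app b a) (.app b' a')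
  | absurd {b b'} : DEq Δ b b' → DEq Δ (.absurd b) (.absurd b')

mutual
  /-- Well-formed signatures `⊢ Δ`. -/
  inductive SigWf : Sig → Prop
    | nil : SigWf []
    | cons {Δ x k A a} : SigWf Δ → lookupSig Δ x = none →
        Typing Δ [] a k A → SigWf ((x, k, A, a) :: Δ)

  /-- Well-formed contexts `Δ ⊢ Γ`. -/
  inductive CtxWf : Sig → Ctx → Prop
    | nil {Δ} : SigWf Δ → CtxWf Δ []
    | cons {Δ Γ x k A} : CtxWf Δ Γ → lookupCtx Γ x = none →
        Typing Δ Γ A k .star → CtxWf Δ ((x, k, A) :: Γ)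

  /-- Level-annotated typing `Δ; Γ ⊢ a :^k A` of full StraTT. -/
  inductive Typing : Sig → Ctx → Tm → ℕ → Tm → Prop
    | star {Δ Γ k} : CtxWf Δ Γ → Typing Δ Γ .star k .star
    | var {Δ Γ x j k A} : CtxWf Δ Γ → lookupCtx Γ x = some (j, A) → j ≤ k →
        Typing Δ Γ (.var x) k A
    | const {Δ Γ x i j k A a} : CtxWf Δ Γ → lookupSig Δ x = some (j, A, a) →
        i + j ≤ k → Typing Δ Γ (.const x i) k (Tm.incr i A)
    | pi {Δ Γ j k x A B} : j < k → Typing Δ Γ A j .star →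
        Typing Δ ((x, j, A) :: Γ) B k .star → Typing Δ Γ (.pi j x A B) k .star
    | lamPi {Δ Γ j k x A B b} : j < k → Typing Δ Γ A j .star →
        Typing Δ ((x, j, A) :: Γ) b k B → Typing Δ Γ (.lam x b) k (.pi j x A B)
    | appPi {Δ Γ j k x A B b a} : Typing Δ Γ b k (.pi j x A B) → Typing Δ Γ a j A →
        Typing Δ Γ (.app b a) k (Tm.subst x a B)
    | arrow {Δ Γ k A B} : Typing Δ Γ A k .star → Typing Δ Γ B k .star →
        Typing Δ Γ (.arrow A B) k .star
    | lamArrow {Δ Γ k x A B b} : Typing Δ Γ A k .star → Typing Δ Γ B k .star →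
        Typing Δ ((x, k, A) :: Γ) b k B → Typing Δ Γ (.lam x b) k (.arrow A B)
    | appArrow {Δ Γ k A B b a} : Typing Δ Γ b k (.arrow A B) → Typing Δ Γ a k A →
        Typing Δ Γ (.app b a) k B
    | bot {Δ Γ k} : CtxWf Δ Γ → Typing Δ Γ .bot k .star
    | absurd {Δ Γ k b A} : Typing Δ Γ b k .bot → Typing Δ Γ A k .star →
        Typing Δ Γ (.absurd b) k A
    | conv {Δ Γ k a A B} : Typing Δ Γ a k A → DEq Δ A B →
        Typing Δ Γ B k .star → Typing Δ Γ a k B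
end

/-- Restriction `⌈Γ⌉^k`: remove all assumptions whose level is strictly
greater than `k`. -/
def restrict (k : ℕ) (Γ : Ctx) : Ctx :=
  Γ.filter (fun e => e.2.1 ≤ k)


/-! Induct on the typing derivation with the restriction level `k'` kept free above the level `k`
of the judgement, so that premises at lower levels (the domain of a `Π` type, the argument of a
stratified application) are restricted at the same `k'` as the conclusion. For the argument of an
application `b a` with `b :^k Πx:^j A. B`, this needs `j ≤ k'`; it holds because every `Π`
annotation occurring in a judgement at level `k` is strictly below `k`, an invariant of all
judgements. -/

namespace Tm

def PiLevelsBelow (k : ℕ) : Tm → Prop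
  | star => True
  | var _ => True
  | const _ _ => True
  | pi j _ A B => j < k ∧ PiLevelsBelow k A ∧ PiLevelsBelow k B
  | arrow A B => PiLevelsBelow k A ∧ PiLevelsBelow k B
  | lam _ b => PiLevelsBelow k b
  | app b a => PiLevelsBelow k b ∧ PiLevelsBelow k a
  | bot => True
  | absurd b => PiLevelsBelow k b

theorem PiLevelsBelow.mono {k k' : ℕ} (hk : k ≤ k') {a : Tm} :
    PiLevelsBelow k a → PiLevelsBelow k' a := by
  induction a with
  | pi j y A B ihA ihB => exact fun h => ⟨h.1.trans_le hk, ihA h.2.1, ihB h.2.2⟩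
  | arrow A B ihA ihB => exact fun h => ⟨ihA h.1, ihB h.2⟩
  | app b a ihb iha => exact fun h => ⟨ihb h.1, iha h.2⟩
  | lam y b ih | absurd b ih => exact ih
  | star | var _ | const _ _ | bot => exact id

theorem PiLevelsBelow.incr {k : ℕ} (i : ℕ) {a : Tm} :
    PiLevelsBelow k a → PiLevelsBelow (i + k) (incr i a) := by
  induction a with
  | pi j y A B ihA ihB => exact fun h => ⟨Nat.add_lt_add_left h.1 i, ihA h.2.1, ihB h.2.2⟩
  | arrow A B ihA ihB => exact fun h => ⟨ihA h.1, ihB h.2⟩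
  | app b a ihb iha => exact fun h => ⟨ihb h.1, iha h.2⟩
  | lam y b ih | absurd b ih => exact ih
  | star | var _ | const _ _ | bot => exact id

theorem PiLevelsBelow.subst {k x : ℕ} {u : Tm} (hu : PiLevelsBelow k u) {b : Tm} :
    PiLevelsBelow k b → PiLevelsBelow k (Tm.subst x u b) := by
  induction b with
  | var y =>
    intro
    unfold Tm.subst
    split
    exacts [hu, trivial]
  | pi j y A B ihA ihB =>
    refine fun h => ⟨h.1, ihA h.2.1, ?_⟩
    split
    exacts [h.2.2, ihB h.2.2]
  | arrow A B ihA ihB => exact fun h => ⟨ihA h.1, ihB h.2⟩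
  | lam y b ih =>
    refine fun h => (?_ : PiLevelsBelow k (if y = x then b else Tm.subst x u b))
    split
    exacts [h, ih h]
  | app b a ihb iha => exact fun h => ⟨ihb h.1, iha h.2⟩
  | absurd b ih => exact ih
  | star | const _ _ | bot => exact id

end Tm

theorem restrict_cons_of_le {k j : ℕ} (x : ℕ) (A : Tm) (Γ : Ctx) (hj : j ≤ k) :
    restrict k ((x, j, A) :: Γ) = (x, j, A) :: restrict k Γ := by
  simp [restrict, hj]

theorem restrict_cons_of_lt {k j : ℕ} (x : ℕ) (A : Tm) (Γ : Ctx) (hj : k < j) :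
    restrict k ((x, j, A) :: Γ) = restrict k Γ := by
  simp [restrict, hj]

theorem lookupCtx_restrict_of_eq_none {k x : ℕ} {Γ : Ctx} (h : lookupCtx Γ x = none) :
    lookupCtx (restrict k Γ) x = none := by
  induction Γ with
  | nil => rfl
  | cons e Γ ih =>
    obtain ⟨y, j, A⟩ := e
    have hxy : x ≠ y := by rintro rfl; simp [lookupCtx] at h
    rw [lookupCtx, if_neg hxy] at h
    rcases le_or_gt j k with hj | hj
    · rw [restrict_cons_of_le _ _ _ hj, lookupCtx, if_neg hxy, ih h]
    · rw [restrict_cons_of_lt _ _ _ hj, ih h]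

theorem lookupCtx_restrict_of_le {k x j : ℕ} {A : Tm} {Γ : Ctx}
    (h : lookupCtx Γ x = some (j, A)) (hj : j ≤ k) :
    lookupCtx (restrict k Γ) x = some (j, A) := by
  induction Γ with
  | nil => cases h
  | cons e Γ ih =>
    obtain ⟨y, j', A'⟩ := e
    by_cases hxy : x = y
    · simp only [lookupCtx, if_pos hxy, Option.some.injEq, Prod.mk.injEq] at h
      obtain ⟨rfl, rfl⟩ := h
      rw [restrict_cons_of_le _ _ _ hj, lookupCtx, if_pos hxy]
    · rw [lookupCtx, if_neg hxy] at h
      rcases le_or_gt j' k with hj' | hj'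
      · rw [restrict_cons_of_le _ _ _ hj', lookupCtx, if_neg hxy, ih h]
      · rw [restrict_cons_of_lt _ _ _ hj', ih h]

def LeveledSig (Δ : Sig) : Prop :=
  ∀ x j A a, lookupSig Δ x = some (j, A, a) → A.PiLevelsBelow j ∧ a.PiLevelsBelow j

def LeveledCtx (Γ : Ctx) : Prop :=
  ∀ x j A, lookupCtx Γ x = some (j, A) → A.PiLevelsBelow j

theorem Typing.ctxWf {Δ : Sig} {Γ : Ctx} {a A : Tm} {k : ℕ} : Typing Δ Γ a k A → CtxWf Δ Γ
  | .star h | .var h _ _ | .const h _ _ | .bot h => h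
  | .pi _ hA _ | .lamPi _ hA _ | .arrow hA _ | .lamArrow hA _ _ => hA.ctxWf
  | .appPi hb _ | .appArrow hb _ | .absurd hb _ => hb.ctxWf
  | .conv ha _ _ => ha.ctxWf

theorem CtxWf.lookupCtx_eq_none {Δ : Sig} {Γ : Ctx} {x k : ℕ} {A : Tm} (h : CtxWf Δ ((x, k, A) :: Γ)) :
    lookupCtx Γ x = none := by
  cases h
  assumption

mutual

theorem SigWf.leveled {Δ : Sig} : SigWf Δ → LeveledSig Δ
  | .nil => fun _ _ _ _ h => by simp [lookupSig] at h
  | .cons hΔ _ ha => fun y j A a h => by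
    unfold lookupSig at h
    split at h
    · obtain ⟨rfl, rfl, rfl⟩ : _ ∧ _ ∧ _ := by simpa [Prod.ext_iff] using h
      exact ha.piLevelsBelow.symm
    · exact hΔ.leveled y j A a h

theorem CtxWf.leveled {Δ : Sig} {Γ : Ctx} : CtxWf Δ Γ → LeveledSig Δ ∧ LeveledCtx Γ
  | .nil hΔ => ⟨hΔ.leveled, fun _ _ _ h => by simp [lookupCtx] at h⟩
  | .cons hΓ _ hA => ⟨hΓ.leveled.1, fun y j A h => by
    unfold lookupCtx at h
    split at h
    · obtain ⟨rfl, rfl⟩ : _ ∧ _ := by simpa [Prod.ext_iff] using h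
      exact hA.piLevelsBelow.1
    · exact hΓ.leveled.2 y j A h⟩

theorem Typing.piLevelsBelow {Δ : Sig} {Γ : Ctx} {a A : Tm} {k : ℕ} :
    Typing Δ Γ a k A → a.PiLevelsBelow k ∧ A.PiLevelsBelow k
  | .star _ | .bot _ => ⟨trivial, trivial⟩
  | .var hΓ hx hj => ⟨trivial, (hΓ.leveled.2 _ _ _ hx).mono hj⟩
  | .const hΓ hx hij => ⟨trivial, ((hΓ.leveled.1 _ _ _ _ hx).1.incr _).mono hij⟩
  | .pi hjk hA hB => ⟨⟨hjk, hA.piLevelsBelow.1.mono hjk.le, hB.piLevelsBelow.1⟩, trivial⟩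
  | .lamPi hjk hA hb =>
    ⟨hb.piLevelsBelow.1, hjk, hA.piLevelsBelow.1.mono hjk.le, hb.piLevelsBelow.2⟩
  | .appPi hb ha =>
    have ⟨hb', hjk, _, hB⟩ := hb.piLevelsBelow
    have ha' := ha.piLevelsBelow.1.mono hjk.le
    ⟨⟨hb', ha'⟩, ha'.subst hB⟩
  | .arrow hA hB => ⟨⟨hA.piLevelsBelow.1, hB.piLevelsBelow.1⟩, trivial⟩
  | .lamArrow hA hB hb => ⟨hb.piLevelsBelow.1, hA.piLevelsBelow.1, hB.piLevelsBelow.1⟩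
  | .appArrow hb ha => ⟨⟨hb.piLevelsBelow.1, ha.piLevelsBelow.1⟩, hb.piLevelsBelow.2.2⟩
  | .absurd hb hA => ⟨hb.piLevelsBelow.1, hA.piLevelsBelow.1⟩
  | .conv ha _ hB => ⟨ha.piLevelsBelow.1, hB.piLevelsBelow.1⟩

end

theorem CtxWf.restrict_cons {Δ : Sig} {Γ : Ctx} {x j k : ℕ} {A : Tm} (hj : j ≤ k)
    (hΓ : CtxWf Δ (restrict k Γ)) (hx : lookupCtx Γ x = none)
    (hA : Typing Δ (restrict k Γ) A j .star) : CtxWf Δ (restrict k ((x, j, A) :: Γ)) := by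
  rw [restrict_cons_of_le x A Γ hj]
  exact .cons hΓ (lookupCtx_restrict_of_eq_none hx) hA

theorem Typing.restrict_of_le {Δ : Sig} {Γ : Ctx} {a A : Tm} {k k' : ℕ} (hk : k ≤ k')
    (hΓ : CtxWf Δ (restrict k' Γ)) : Typing Δ Γ a k A → Typing Δ (restrict k' Γ) a k A
  | .star _ => .star hΓ
  | .bot _ => .bot hΓ
  | .var _ hx hj => .var hΓ (lookupCtx_restrict_of_le hx (hj.trans hk)) hj
  | .const _ hx hij => .const hΓ hx hij
  | .pi hjk hA hB => by
    have hj := hjk.le.trans hk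
    have hA' := hA.restrict_of_le hj hΓ
    have hB' := hB.restrict_of_le hk (hΓ.restrict_cons hj hB.ctxWf.lookupCtx_eq_none hA')
    rw [restrict_cons_of_le _ _ _ hj] at hB'
    exact .pi hjk hA' hB'
  | .lamPi hjk hA hb => by
    have hj := hjk.le.trans hk
    have hA' := hA.restrict_of_le hj hΓ
    have hb' := hb.restrict_of_le hk (hΓ.restrict_cons hj hb.ctxWf.lookupCtx_eq_none hA')
    rw [restrict_cons_of_le _ _ _ hj] at hb'
    exact .lamPi hjk hA' hb'
  | .appPi hb ha =>
    .appPi (hb.restrict_of_le hk hΓ)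
      (ha.restrict_of_le ((hb.piLevelsBelow.2.1).le.trans hk) hΓ)
  | .arrow hA hB => .arrow (hA.restrict_of_le hk hΓ) (hB.restrict_of_le hk hΓ)
  | .lamArrow hA hB hb => by
    have hA' := hA.restrict_of_le hk hΓ
    have hb' := hb.restrict_of_le hk (hΓ.restrict_cons hk hb.ctxWf.lookupCtx_eq_none hA')
    rw [restrict_cons_of_le _ _ _ hk] at hb'
    exact .lamArrow hA' (hB.restrict_of_le hk hΓ) hb'
  | .appArrow hb ha => .appArrow (hb.restrict_of_le hk hΓ) (ha.restrict_of_le hk hΓ)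
  | .absurd hb hA => .absurd (hb.restrict_of_le hk hΓ) (hA.restrict_of_le hk hΓ)
  | .conv ha hAB hB => .conv (ha.restrict_of_le hk hΓ) hAB (hB.restrict_of_le hk hΓ)

theorem CtxWf.restrict {Δ : Sig} {Γ : Ctx} (h : CtxWf Δ Γ) (k : ℕ) :
    CtxWf Δ (restrict k Γ) := by
  induction Γ with
  | nil => exact h
  | cons e Γ ih =>
    obtain ⟨x, j, A⟩ := e
    obtain _ | ⟨hΓ, hx, hA⟩ := h
    rcases le_or_gt j k with hj | hj
    · exact (ih hΓ).restrict_cons hj hx (hA.restrict_of_le hj (ih hΓ))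
    · rw [restrict_cons_of_lt x A Γ hj]
      exact ih hΓ

/-- **Restriction (StraTT)**: if `Δ ⊢ Γ` then `Δ ⊢ ⌈Γ⌉^k` for every `k`, and
if `Δ; Γ ⊢ a :^k A` then `Δ; ⌈Γ⌉^k ⊢ a :^k A`. -/
theorem stratt_restriction {Δ : Sig} {Γ : Ctx} :
    (CtxWf Δ Γ → ∀ k, CtxWf Δ (restrict k Γ)) ∧
    (∀ a A k, Typing Δ Γ a k A → Typing Δ (restrict k Γ) a k A) :=
  ⟨CtxWf.restrict, fun _ _ k h => h.restrict_of_le le_rfl (h.ctxWf.restrict k)⟩
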